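/- Let λ > 0 be real, let p be a positive integer with 2pλ ≤ √3. Then the head sum J_{[1,p]} = ∑_{j=1}^{p} v(j,λ) satisfies the two-sided sandwich: −(p−1)·exp(−2(p−1)²λ²) + v(p,λ) ≤ J_{[1,p]} ≤ exp(−2λ²) − p·exp(−2p²λ²) + v(p,λ), where v(r,λ) = (4r²λ² − 1)·exp(−2r²λ²). -/

import Mathlib

/-!
The derivative of `v(·,λ)` is `4rλ²(3 - 4r²λ²)·exp(-2r²λ²)`, which is nonnegative on `[0, p]`
once `4p²λ² ≤ 3`. Comparing sums of a monotone function with its integrals, the sum of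
`v(j,λ)` over `1 ≤ j < p` lies between `∫₀^{p-1} v` and `∫₁^p v`, and both integrals are explicit
because `-r·exp(-2r²λ²)` is a primitive of `v(·,λ)`.
-/

noncomputable def v (r l : ℝ) : ℝ := (4 * r ^ 2 * l ^ 2 - 1) * Real.exp (-2 * r ^ 2 * l ^ 2)

namespace MonotoneOn

variable {f : ℝ → ℝ} {p : ℕ}

theorem integral_add_le_sum_Icc (hp : 0 < p) (hf : MonotoneOn f (Set.Icc 0 p)) :
    (∫ x in (0 : ℝ)..p - 1, f x) + f p ≤ ∑ j ∈ Finset.Icc 1 p, f j := by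
  obtain ⟨m, rfl⟩ : ∃ m, p = m + 1 := ⟨p - 1, by omega⟩
  have key := MonotoneOn.integral_le_sum_Ico (a := 0) (b := m) m.zero_le
    (by simpa using hf.mono (Set.Icc_subset_Icc le_rfl (by simp)))
  rw [Finset.sum_Ico_add' (fun j : ℕ ↦ f j), zero_add, Nat.cast_zero] at key
  rw [Finset.Icc_eq_cons_Ico hp, Finset.sum_cons]
  push_cast
  rw [add_sub_cancel_right]
  linarith

theorem sum_Icc_le_integral_add (hp : 0 < p) (hf : MonotoneOn f (Set.Icc 0 p)) :
    ∑ j ∈ Finset.Icc 1 p, f j ≤ (∫ x in (1 : ℝ)..p, f x) + f p := by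
  have key := MonotoneOn.sum_le_integral_Ico (a := 1) (b := p) hp
    (by simpa using hf.mono (Set.Icc_subset_Icc zero_le_one le_rfl))
  rw [Nat.cast_one] at key
  rw [Finset.Icc_eq_cons_Ico hp, Finset.sum_cons]
  linarith

end MonotoneOn

theorem hasDerivAt_v (l r : ℝ) :
    HasDerivAt (fun x ↦ v x l)
      (4 * r * l ^ 2 * (3 - 4 * r ^ 2 * l ^ 2) * Real.exp (-2 * r ^ 2 * l ^ 2)) r := by
  unfold v
  refine ((((hasDerivAt_pow 2 r).const_mul 4).mul_const (l ^ 2) |>.sub_const 1).mul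
    (((hasDerivAt_pow 2 r).const_mul (-2)).mul_const (l ^ 2)).exp).congr_deriv ?_
  ring

theorem hasDerivAt_primitive_v (l r : ℝ) :
    HasDerivAt (fun x ↦ -x * Real.exp (-2 * x ^ 2 * l ^ 2)) (v r l) r := by
  unfold v
  refine ((hasDerivAt_id r).neg.mul
    (((hasDerivAt_pow 2 r).const_mul (-2)).mul_const (l ^ 2)).exp).congr_deriv ?_
  simp only [Pi.neg_apply, id, Nat.cast_ofNat]
  ring

theorem continuous_v (l : ℝ) : Continuous fun x ↦ v x l := by
  unfold v; fun_prop

theorem integral_v (l a b : ℝ) :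
    ∫ x in a..b, v x l = a * Real.exp (-2 * a ^ 2 * l ^ 2) - b * Real.exp (-2 * b ^ 2 * l ^ 2) := by
  rw [intervalIntegral.integral_eq_sub_of_hasDerivAt (fun x _ ↦ hasDerivAt_primitive_v l x)
    ((continuous_v l).intervalIntegrable a b)]
  ring

theorem monotoneOn_v {l c : ℝ} (hc : 4 * c ^ 2 * l ^ 2 ≤ 3) :
    MonotoneOn (fun x ↦ v x l) (Set.Icc 0 c) := by
  refine monotoneOn_of_deriv_nonneg (convex_Icc 0 c) (continuous_v l).continuousOn
    (fun x _ ↦ (hasDerivAt_v l x).differentiableAt.differentiableWithinAt) fun x hx ↦ ?_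
  rw [interior_Icc] at hx
  have hxc : 4 * x ^ 2 * l ^ 2 ≤ 3 := le_trans (by gcongr; exacts [hx.1.le, hx.2.le]) hc
  rw [(hasDerivAt_v l x).deriv]
  have : 0 ≤ x := hx.1.le
  have : 0 ≤ 3 - 4 * x ^ 2 * l ^ 2 := by linarith
  positivity

/-- Head sandwich: for `λ > 0` and a positive integer `p` with `2pλ ≤ √3`, the head sum
`J_{[1,p]} = ∑_{j=1}^p v(j,λ)` satisfies
`-(p-1)·exp(-2(p-1)²λ²) + v(p,λ) ≤ J_{[1,p]} ≤ exp(-2λ²) - p·exp(-2p²λ²) + v(p,λ)`. -/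
theorem stmt_18 (l : ℝ) (hl : 0 < l) (p : ℕ) (hp : 0 < p)
    (h : 2 * p * l ≤ Real.sqrt 3) :
    -((p : ℝ) - 1) * Real.exp (-2 * ((p : ℝ) - 1) ^ 2 * l ^ 2) + v p l
      ≤ (∑ j ∈ Finset.Icc 1 p, v j l) ∧
    (∑ j ∈ Finset.Icc 1 p, v j l)
      ≤ Real.exp (-2 * l ^ 2) - p * Real.exp (-2 * (p : ℝ) ^ 2 * l ^ 2) + v p l := by
  have hc : 4 * (p : ℝ) ^ 2 * l ^ 2 ≤ 3 := by
    have := pow_le_pow_left₀ (by positivity) h 2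
    rw [Real.sq_sqrt zero_le_three] at this
    linarith
  have hmono := monotoneOn_v hc
  constructor
  · have := hmono.integral_add_le_sum_Icc hp
    rw [integral_v] at this
    linarith
  · have := hmono.sum_Icc_le_integral_add hp
    rw [integral_v, one_pow, mul_one, one_mul] at this
    linarith
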